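/- arXiv:1005.3149 — 3 statements merged into one kernel-verified Lean document; each statement's English description precedes it below -/
import Mathlib

section
/- Let (X, d) be a cone metric space over a Banach space E with normal cone P of normal constant k. A sequence (xₙ) in X converges to x ∈ X (i.e., for every c ∈ E with c ≫ 0 there is N such that d(xₙ, x) ≪ c for all n > N) if and only if ‖d(xₙ, x)‖ → 0 as n → ∞. -/
open Filter Topology Pointwise

/-- A cone in a real normed space: closed, nonempty, not `{0}`, closed under
nonnegative linear combinations, and pointed. -/
def IsCone {E : Type*} [NormedAddCommGroup E] [NormedSpace ℝ E] (P : Set E) : Prop :=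
  IsClosed P ∧ P.Nonempty ∧ P ≠ {0} ∧
  (∀ a b : ℝ, 0 ≤ a → 0 ≤ b → ∀ x ∈ P, ∀ y ∈ P, a • x + b • y ∈ P) ∧
  (∀ x ∈ P, -x ∈ P → x = 0)

/-- The partial ordering induced by a cone: `x ≤ y` iff `y - x ∈ P`. -/
def coneLE {E : Type*} [NormedAddCommGroup E] [NormedSpace ℝ E] (P : Set E) (x y : E) : Prop :=
  y - x ∈ P

/-- `P` is a normal cone with normal constant `k`: `0 ≤ x ≤ y` implies `‖x‖ ≤ k‖y‖`. -/
def IsNormalCone {E : Type*} [NormedAddCommGroup E] [NormedSpace ℝ E] (P : Set E) (k : ℝ) : Prop :=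
  ∀ x y : E, x ∈ P → y - x ∈ P → ‖x‖ ≤ k * ‖y‖

/-- `d` is a cone metric on `X` with values in `(E, P)`. -/
structure IsConeMetric {E : Type*} [NormedAddCommGroup E] [NormedSpace ℝ E]
    (P : Set E) {X : Type*} (d : X → X → E) : Prop where
  mem_cone : ∀ x y, d x y ∈ P
  eq_zero_iff : ∀ x y, d x y = 0 ↔ x = y
  symm : ∀ x y, d x y = d y x
  triangle : ∀ x y z, d x z + d z y - d x y ∈ P

/-- Convergence of a sequence in a cone metric space. -/
def ConeConv {E : Type*} [NormedAddCommGroup E] [NormedSpace ℝ E]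
    (P : Set E) {X : Type*} (d : X → X → E) (s : ℕ → X) (x : X) : Prop :=
  ∀ c ∈ interior P, ∃ N, ∀ n > N, c - d (s n) x ∈ interior P

/-- Cauchy sequences in a cone metric space. -/
def ConeCauchy {E : Type*} [NormedAddCommGroup E] [NormedSpace ℝ E]
    (P : Set E) {X : Type*} (d : X → X → E) (s : ℕ → X) : Prop :=
  ∀ c ∈ interior P, ∃ N, ∀ n > N, ∀ m > N, c - d (s n) (s m) ∈ interior P

/-- A cone metric space is complete if every Cauchy sequence converges. -/
def ConeComplete {E : Type*} [NormedAddCommGroup E] [NormedSpace ℝ E]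
    (P : Set E) {X : Type*} (d : X → X → E) : Prop :=
  ∀ s : ℕ → X, ConeCauchy P d s → ∃ x, ConeConv P d s x

theorem eventually_sub_mem_interior_of_tendsto_norm {E ι : Type*} [SeminormedAddCommGroup E]
    {l : Filter ι} {u : ι → E} (h : Tendsto (fun i => ‖u i‖) l (𝓝 0)) {P : Set E} {c : E}
    (hc : c ∈ interior P) :
    ∀ᶠ i in l, c - u i ∈ interior P := by
  have hlim : Tendsto (fun i => c - u i) l (𝓝 c) := by
    simpa using tendsto_const_nhds.sub (tendsto_zero_iff_norm_tendsto_zero.2 h)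
  exact hlim (isOpen_interior.mem_nhds hc)

section

variable {E : Type*} [NormedAddCommGroup E] [NormedSpace ℝ E] {P : Set E}

theorem IsCone.smul_mem (hP : IsCone P) {t : ℝ} (ht : 0 ≤ t) {x : E} (hx : x ∈ P) :
    t • x ∈ P := by
  simpa using hP.2.2.2.1 t 0 ht le_rfl x hx x hx

theorem IsCone.smul_mem_interior (hP : IsCone P) {t : ℝ} (ht : 0 < t) {x : E}
    (hx : x ∈ interior P) : t • x ∈ interior P := by
  have hmem : t • x ∈ interior (t • P) := by
    rw [interior_smul₀ ht.ne']
    exact Set.smul_mem_smul_set hx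
  exact interior_mono (Set.smul_set_subset_iff.2 fun _ hy => hP.smul_mem ht.le hy) hmem

theorem IsCone.exists_mem_interior_norm_lt (hP : IsCone P) (hint : (interior P).Nonempty)
    {ε : ℝ} (hε : 0 < ε) : ∃ c ∈ interior P, ‖c‖ < ε := by
  obtain ⟨c, hc⟩ := hint
  have ht : 0 < ε / (‖c‖ + 1) := by positivity
  refine ⟨(ε / (‖c‖ + 1)) • c, hP.smul_mem_interior ht hc, ?_⟩
  rw [norm_smul, Real.norm_of_nonneg ht.le, div_mul_eq_mul_div, div_lt_iff₀ (by positivity)]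
  exact mul_lt_mul_of_pos_left (lt_add_one _) hε

theorem coneConv_iff_eventually {X : Type*} (d : X → X → E) (s : ℕ → X) (x : X) :
    ConeConv P d s x ↔ ∀ c ∈ interior P, ∀ᶠ n in atTop, c - d (s n) x ∈ interior P := by
  simp only [ConeConv, atTop_basis_Ioi.eventually_iff, true_and, Set.mem_Ioi]

/-- In a normal cone, `u ≪ c` forces `‖u‖ ≤ k ‖c‖`, and `c ≫ 0` can be taken arbitrarily
small. -/
theorem IsNormalCone.tendsto_norm_zero {ι : Type*} {l : Filter ι} {k : ℝ} (hP : IsCone P)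
    (hint : (interior P).Nonempty) (hk : 0 < k) (hnorm : IsNormalCone P k) {u : ι → E}
    (hu : ∀ i, u i ∈ P) (h : ∀ c ∈ interior P, ∀ᶠ i in l, c - u i ∈ interior P) :
    Tendsto (fun i => ‖u i‖) l (𝓝 0) := by
  rw [Metric.tendsto_nhds]
  intro ε hε
  obtain ⟨c, hc, hcε⟩ := hP.exists_mem_interior_norm_lt hint (div_pos hε hk)
  filter_upwards [h c hc] with i hi
  rw [dist_zero_right, norm_norm]
  calc ‖u i‖ ≤ k * ‖c‖ := hnorm _ _ (hu i) (interior_subset hi)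
    _ < ε := by rwa [lt_div_iff₀' hk] at hcε

end

theorem coneConv_iff_norm_tendsto_zero_general {E : Type*} [NormedAddCommGroup E] [NormedSpace ℝ E]
    {X : Type*} (P : Set E) (hP : IsCone P)
    (hint : (interior P).Nonempty) (k : ℝ) (hk : 0 < k) (hnorm : IsNormalCone P k)
    (d : X → X → E) (hd : IsConeMetric P d) (s : ℕ → X) (x : X) :
    ConeConv P d s x ↔ Tendsto (fun n => ‖d (s n) x‖) atTop (𝓝 0) := by
  rw [coneConv_iff_eventually]
  exact ⟨hnorm.tendsto_norm_zero hP hint hk fun n => hd.mem_cone _ _,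
    fun h _ hc => eventually_sub_mem_interior_of_tendsto_norm h hc⟩

theorem coneConv_iff_norm_tendsto_zero {E : Type*} [NormedAddCommGroup E] [NormedSpace ℝ E]
    [CompleteSpace E] {X : Type*} (P : Set E) (hP : IsCone P)
    (hint : (interior P).Nonempty) (k : ℝ) (hk : 0 < k) (hnorm : IsNormalCone P k)
    (d : X → X → E) (hd : IsConeMetric P d) (s : ℕ → X) (x : X) :
    ConeConv P d s x ↔ Tendsto (fun n => ‖d (s n) x‖) atTop (𝓝 0) :=
  coneConv_iff_norm_tendsto_zero_general P hP hint k hk hnorm d hd s x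
end

section
/- Under the hypotheses of the generalized Ćirić theorem in a cone metric space (contractive condition with operator coefficients A₁,…,A₄ as stated), for any starting point x₀ ∈ X the Picard iterates xₙ = Tⁿx₀ satisfy d(xₙ, xₙ₊₁) ≤ S(xₙ₋₁, xₙ) S(xₙ₋₂, xₙ₋₁) ⋯ S(x₀, x₁) d(x₀, x₁), and hence ‖d(xₙ, xₙ₊₁)‖ ≤ k βⁿ ‖d(x₀, x₁)‖. -/
open Filter Topology

/-!
Along the orbit, the contractive condition at `(xₙ, xₙ₊₁)` has `d(xₙ₊₁, xₙ₊₁) = 0` in its last term,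
and the triangle inequality `d(xₙ, xₙ₊₂) ≤ d(xₙ, xₙ₊₁) + d(xₙ₊₁, xₙ₊₂)` (pushed through the positive
operator `A₄`) turns it into `(I - A₃ - A₄) d(xₙ₊₁, xₙ₊₂) ≤ (A₁ + A₂ + A₄) d(xₙ, xₙ₊₁)`. Applying the
positive inverse gives `d(xₙ₊₁, xₙ₊₂) ≤ S(xₙ, xₙ₊₁) d(xₙ, xₙ₊₁)`; since every `S` is positive these
one-step bounds compose into the operator product, whose norm is at most `βⁿ`, and normality of the
cone converts the order bound into the norm bound.
-/

theorem List.prod_map_reverse_range_succ {M : Type*} [Monoid M] (f : ℕ → M) (n : ℕ) :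
    ((List.range (n + 1)).reverse.map f).prod = f n * ((List.range n).reverse.map f).prod := by
  simp [List.range_succ]

theorem ContinuousLinearMap.norm_prod_map_reverse_range_apply_le {𝕜 E : Type*}
    [NontriviallyNormedField 𝕜] [SeminormedAddCommGroup E] [NormedSpace 𝕜 E] {β : ℝ}
    (L : ℕ → E →L[𝕜] E) (hL : ∀ i, ‖L i‖ ≤ β) (v : E) (n : ℕ) :
    ‖((List.range n).reverse.map L).prod v‖ ≤ β ^ n * ‖v‖ := by
  induction n with
  | zero => simp
  | succ n ih =>
    rw [List.prod_map_reverse_range_succ, mul_apply_eq_comp, pow_succ', mul_assoc]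
    exact (L n).le_of_opNorm_le_of_le (hL n) ih

section Cone

variable {E : Type*} [NormedAddCommGroup E] [NormedSpace ℝ E] {P : Set E}

theorem IsCone.add_mem (hP : IsCone P) {x y : E} (hx : x ∈ P) (hy : y ∈ P) : x + y ∈ P := by
  simpa using hP.2.2.2.1 1 1 zero_le_one zero_le_one x hx y hy

theorem IsCone.zero_mem (hP : IsCone P) : (0 : E) ∈ P := by
  obtain ⟨e, he⟩ := hP.2.1
  simpa using hP.2.2.2.1 0 0 le_rfl le_rfl e he e he

theorem inverse_mul_apply_sub_mem {B M : E →L[ℝ] E} (hB : IsUnit B)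
    (hBP : ∀ p ∈ P, Ring.inverse B p ∈ P) {v w : E} (h : M v - B w ∈ P) :
    (Ring.inverse B * M) v - w ∈ P := by
  have := hBP _ h
  rwa [map_sub, ← mul_apply_eq_comp, ← mul_apply_eq_comp, Ring.inverse_mul_cancel _ hB,
    one_apply_eq_self] at this

theorem inverse_mul_add_apply_mem {B M N : E →L[ℝ] E} (hP : IsCone P)
    (hBP : ∀ p ∈ P, Ring.inverse B p ∈ P) (hM : ∀ p ∈ P, M p ∈ P) (hN : ∀ p ∈ P, N p ∈ P)
    {p : E} (hp : p ∈ P) : (Ring.inverse B * (M + N)) p ∈ P :=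
  hBP _ (hP.add_mem (hM p hp) (hN p hp))

theorem prod_map_reverse_range_apply_sub_mem (hP : IsCone P) (L : ℕ → E →L[ℝ] E) (u : ℕ → E)
    (hL : ∀ i, ∀ p ∈ P, L i p ∈ P) (hu : ∀ i, L i (u i) - u (i + 1) ∈ P) (n : ℕ) :
    ((List.range n).reverse.map L).prod (u 0) - u n ∈ P := by
  induction n with
  | zero => simpa using hP.zero_mem
  | succ n ih =>
    rw [List.prod_map_reverse_range_succ, mul_apply_eq_comp]
    have := hP.add_mem (hL n _ ih) (hu n)
    rwa [map_sub, sub_add_sub_cancel] at this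

theorem ciric_orbit_step (hP : IsCone P) {X : Type*} {d : X → X → E} (hd : IsConeMetric P d)
    (A₁ A₂ A₃ A₄ : E →L[ℝ] E) (h4 : ∀ p ∈ P, A₄ p ∈ P) {x y z : X}
    (hcontr : A₁ (d x y) + A₂ (d x y) + A₃ (d y z) + A₄ (d x z) + A₄ (d y y) - d y z ∈ P) :
    (A₁ + A₂ + A₄) (d x y) - (1 - A₃ - A₄) (d y z) ∈ P := by
  have h := hP.add_mem hcontr (h4 _ (hd.triangle x z y))
  rw [(hd.eq_zero_iff y y).mpr rfl, map_zero, add_zero] at h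
  convert h using 1
  simp only [add_apply, sub_apply, one_apply_eq_self, map_add, map_sub]
  abel

end Cone

theorem picard_iterates_bound_general {E : Type*} [NormedAddCommGroup E] [NormedSpace ℝ E]
    {X : Type*} (P : Set E) (hP : IsCone P)
    (k : ℝ) (hk : 1 ≤ k) (hnorm : IsNormalCone P k)
    (d : X → X → E) (hd : IsConeMetric P d)
    (T : X → X) (A₁ A₂ A₃ A₄ : X → X → E →L[ℝ] E)
    (hcontr : ∀ x y : X,
      A₁ x y (d x y) + A₂ x y (d x (T x)) + A₃ x y (d y (T y)) +
        A₄ x y (d x (T y)) + A₄ x y (d y (T x)) - d (T x) (T y) ∈ P)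
    (h12 : ∀ x y : X, ∀ p ∈ P, (A₁ x y + A₂ x y) p ∈ P)
    (h4 : ∀ x y : X, ∀ p ∈ P, A₄ x y p ∈ P)
    (hinv : ∀ x y : X, IsUnit (1 - A₃ x y - A₄ x y))
    (hinvP : ∀ x y : X, ∀ p ∈ P, Ring.inverse (1 - A₃ x y - A₄ x y) p ∈ P)
    (S : X → X → E →L[ℝ] E)
    (hSdef : ∀ x y : X,
      S x y = Ring.inverse (1 - A₃ x y - A₄ x y) * (A₁ x y + A₂ x y + A₄ x y))
    (β : ℝ) (hSβ : ∀ x y : X, ‖S x y‖ ≤ β)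
    (xseq : ℕ → X)
    (hxseq : ∀ n : ℕ, xseq (n + 1) = T (xseq n)) :
    ∀ n : ℕ,
      (((List.range n).reverse.map (fun i => S (xseq i) (xseq (i + 1)))).prod
          (d (xseq 0) (xseq 1)) - d (xseq n) (xseq (n + 1)) ∈ P) ∧
      ‖d (xseq n) (xseq (n + 1))‖ ≤ k * β ^ n * ‖d (xseq 0) (xseq 1)‖ := by
  have hS_pos : ∀ x y, ∀ p ∈ P, S x y p ∈ P := fun x y p hp => by
    rw [hSdef]
    exact inverse_mul_add_apply_mem hP (hinvP x y) (h12 x y) (h4 x y) hp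
  have hstep : ∀ i, S (xseq i) (xseq (i + 1)) (d (xseq i) (xseq (i + 1))) -
      d (xseq (i + 1)) (xseq (i + 1 + 1)) ∈ P := fun i => by
    rw [hSdef]
    refine inverse_mul_apply_sub_mem (hinv _ _) (hinvP _ _)
      (ciric_orbit_step hP hd _ _ _ _ (h4 _ _) ?_)
    simpa only [← hxseq] using hcontr (xseq i) (xseq (i + 1))
  intro n
  have hle := prod_map_reverse_range_apply_sub_mem hP _ (fun i => d (xseq i) (xseq (i + 1)))
    (fun _ => hS_pos _ _) hstep n
  refine ⟨hle, ?_⟩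
  calc ‖d (xseq n) (xseq (n + 1))‖
      ≤ k * ‖((List.range n).reverse.map fun i => S (xseq i) (xseq (i + 1))).prod
          (d (xseq 0) (xseq 1))‖ := hnorm _ _ (hd.mem_cone _ _) hle
    _ ≤ k * (β ^ n * ‖d (xseq 0) (xseq 1)‖) :=
      mul_le_mul_of_nonneg_left
        (ContinuousLinearMap.norm_prod_map_reverse_range_apply_le _ (fun _ => hSβ _ _) _ n)
        (zero_le_one.trans hk)
    _ = k * β ^ n * ‖d (xseq 0) (xseq 1)‖ := (mul_assoc _ _ _).symm

theorem picard_iterates_bound {E : Type*} [NormedAddCommGroup E] [NormedSpace ℝ E]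
    [CompleteSpace E] {X : Type*} (P : Set E) (hP : IsCone P)
    (k : ℝ) (hk : 1 ≤ k) (hnorm : IsNormalCone P k)
    (d : X → X → E) (hd : IsConeMetric P d)
    (T : X → X) (A₁ A₂ A₃ A₄ : X → X → E →L[ℝ] E)
    (hcontr : ∀ x y : X,
      A₁ x y (d x y) + A₂ x y (d x (T x)) + A₃ x y (d y (T y)) +
        A₄ x y (d x (T y)) + A₄ x y (d y (T x)) - d (T x) (T y) ∈ P)
    (h12 : ∀ x y : X, ∀ p ∈ P, (A₁ x y + A₂ x y) p ∈ P)
    (h4 : ∀ x y : X, ∀ p ∈ P, A₄ x y p ∈ P)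
    (hinv : ∀ x y : X, IsUnit (1 - A₃ x y - A₄ x y))
    (hinvP : ∀ x y : X, ∀ p ∈ P, Ring.inverse (1 - A₃ x y - A₄ x y) p ∈ P)
    (S : X → X → E →L[ℝ] E)
    (hSdef : ∀ x y : X,
      S x y = Ring.inverse (1 - A₃ x y - A₄ x y) * (A₁ x y + A₂ x y + A₄ x y))
    (β : ℝ) (hβ0 : 0 ≤ β) (hβ1 : β < 1) (hSβ : ∀ x y : X, ‖S x y‖ ≤ β)
    (x₀ : X) (xseq : ℕ → X) (hx0 : xseq 0 = x₀)
    (hxseq : ∀ n : ℕ, xseq (n + 1) = T (xseq n)) :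
    ∀ n : ℕ,
      (((List.range n).reverse.map (fun i => S (xseq i) (xseq (i + 1)))).prod
          (d (xseq 0) (xseq 1)) - d (xseq n) (xseq (n + 1)) ∈ P) ∧
      ‖d (xseq n) (xseq (n + 1))‖ ≤ k * β ^ n * ‖d (xseq 0) (xseq 1)‖ :=
  picard_iterates_bound_general P hP k hk hnorm d hd T A₁ A₂ A₃ A₄ hcontr h12 h4 hinv hinvP S hSdef
    β hSβ xseq hxseq
end

section
/- Under the hypotheses of the generalized Ćirić theorem in a cone metric space, if u and v are both fixed points of T, then u = v. More precisely, from d(u,v) = d(Tu,Tv) ≤ A₁(u,v)d(u,v) + 2A₄(u,v)d(u,v) and the bound ‖A₁(u,v)‖ + 2‖A₄(u,v)‖ ≤ α < 1/k with P normal of constant k, it follows that d(u,v) = 0. -/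
open Filter Topology

section

variable {E : Type*} [NormedAddCommGroup E] [NormedSpace ℝ E]

theorem IsConeMetric.apply_self {P : Set E} {X : Type*} {d : X → X → E}
    (hd : IsConeMetric P d) (x : X) : d x x = 0 :=
  (hd.eq_zero_iff x x).2 rfl

-- At fixed points `d u (T u) = d v (T v) = 0` and `d u (T v) = d v (T u) = d u v`.
theorem IsConeMetric.sub_mem_of_ciric_of_fixed {P : Set E} {X : Type*} {d : X → X → E}
    (hd : IsConeMetric P d) {T : X → X} {A₁ A₂ A₃ A₄ : E →L[ℝ] E} {u v : X}
    (hcontr : A₁ (d u v) + A₂ (d u (T u)) + A₃ (d v (T v)) +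
        A₄ (d u (T v)) + A₄ (d v (T u)) - d (T u) (T v) ∈ P)
    (hu : T u = u) (hv : T v = v) :
    (A₁ + (2 : ℝ) • A₄) (d u v) - d u v ∈ P := by
  rw [hu, hv, hd.apply_self, hd.apply_self, hd.symm v u, map_zero, map_zero] at hcontr
  convert hcontr using 1
  simp only [add_apply, two_smul]
  abel

theorem IsNormalCone.eq_zero_of_sub_mem {P : Set E} {k : ℝ} (hP : IsNormalCone P k)
    (hk : 0 ≤ k) {B : E →L[ℝ] E} (hB : k * ‖B‖ < 1) {w : E} (hw : w ∈ P)
    (hBw : B w - w ∈ P) : w = 0 := by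
  have h : ‖w‖ ≤ k * ‖B‖ * ‖w‖ :=
    calc ‖w‖ ≤ k * ‖B w‖ := hP w (B w) hw hBw
      _ ≤ k * (‖B‖ * ‖w‖) := by gcongr; exact B.le_opNorm w
      _ = k * ‖B‖ * ‖w‖ := by ring
  exact norm_eq_zero.1 (by nlinarith [norm_nonneg w])

end

theorem fixed_point_unique_general {E : Type*} [NormedAddCommGroup E] [NormedSpace ℝ E]
    {X : Type*} (P : Set E)
    (k : ℝ) (hk : 1 ≤ k) (hnorm : IsNormalCone P k)
    (d : X → X → E) (hd : IsConeMetric P d)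
    (T : X → X) (A₁ A₂ A₃ A₄ : X → X → E →L[ℝ] E)
    (hcontr : ∀ x y : X,
      A₁ x y (d x y) + A₂ x y (d x (T x)) + A₃ x y (d y (T y)) +
        A₄ x y (d x (T y)) + A₄ x y (d y (T x)) - d (T x) (T y) ∈ P)
    (α : ℝ) (hαk : α < 1 / k)
    (hA : ∀ x y : X, ‖A₁ x y‖ + ‖A₂ x y‖ + ‖A₃ x y‖ + 2 * ‖A₄ x y‖ ≤ α)
    (u v : X) (hu : T u = u) (hv : T v = v) :
    d u v = 0 ∧ u = v := by
  set B := A₁ u v + (2 : ℝ) • A₄ u v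
  have hB : ‖B‖ ≤ α :=
    calc ‖B‖ ≤ ‖A₁ u v‖ + 2 * ‖A₄ u v‖ := by
          grw [norm_add_le, norm_smul, Real.norm_two]
      _ ≤ α := by linarith [hA u v, norm_nonneg (A₂ u v), norm_nonneg (A₃ u v)]
  have hk₀ : 0 < k := by linarith
  have hkB : k * ‖B‖ < 1 :=
    calc k * ‖B‖ ≤ k * α := by gcongr
      _ < k * (1 / k) := by gcongr
      _ = 1 := by field_simp
  have huv := hnorm.eq_zero_of_sub_mem hk₀.le hkB (hd.mem_cone u v)
    (hd.sub_mem_of_ciric_of_fixed (hcontr u v) hu hv)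
  exact ⟨huv, (hd.eq_zero_iff u v).1 huv⟩

theorem fixed_point_unique {E : Type*} [NormedAddCommGroup E] [NormedSpace ℝ E]
    [CompleteSpace E] {X : Type*} (P : Set E) (hP : IsCone P)
    (k : ℝ) (hk : 1 ≤ k) (hnorm : IsNormalCone P k)
    (d : X → X → E) (hd : IsConeMetric P d)
    (T : X → X) (A₁ A₂ A₃ A₄ : X → X → E →L[ℝ] E)
    (hcontr : ∀ x y : X,
      A₁ x y (d x y) + A₂ x y (d x (T x)) + A₃ x y (d y (T y)) +
        A₄ x y (d x (T y)) + A₄ x y (d y (T x)) - d (T x) (T y) ∈ P)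
    (α : ℝ) (hα0 : 0 ≤ α) (hαk : α < 1 / k)
    (hA : ∀ x y : X, ‖A₁ x y‖ + ‖A₂ x y‖ + ‖A₃ x y‖ + 2 * ‖A₄ x y‖ ≤ α)
    (u v : X) (hu : T u = u) (hv : T v = v) :
    d u v = 0 ∧ u = v :=
  fixed_point_unique_general P k hk hnorm d hd T A₁ A₂ A₃ A₄ hcontr α hαk hA u v hu hv
end
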